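/- arXiv:1804.04514 — 5 statements merged into one kernel-verified Lean document; each statement's English description precedes it below -/
import Mathlib

section
/- Let A = (A_{ij}) and B = (B_{ij}) be n×(n+1) matrices (rows indexed 1..n, columns indexed 0..n) over a field of characteristic zero. Let M be the (2n+1)×(2n+1) matrix whose first n rows are (A restricted to columns 1..n | B over columns 0..n), whose next n rows are (B restricted to columns 1..n | A over columns 0..n), and whose last row is all 1's. Then det M = (1/2) · det_{1≤i,j≤n}(A_{ij} - B_{ij}) · det N, where N is the (n+1)×(n+1) matrix whose first n rows are (A_{ij} + B_{ij}) for columns 0..n and whose last row is all 2's. -/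
/-!
Subtract from each of the first `n` columns the column of the right-hand block that carries the
same column of `A` (resp. `B`): the lower-left block becomes `B' - A'` over a zero row, where `'`
drops column `0`. Adding the first `n` rows to the next `n` then clears it, leaving a block upper
triangular matrix with diagonal blocks `A' - B'` and `A + B` followed by a row of `1`s. Scaling
that last row by `2` gives `N`, which is where the factor `1/2` comes from.
-/

namespace Matrix

section BlockOperations

variable {ι κ R : Type*} [Fintype ι] [Fintype κ] [DecidableEq ι] [DecidableEq κ] [CommRing R]
  (X : Matrix ι ι R) (Y : Matrix ι κ R) (Z : Matrix κ ι R) (W : Matrix κ κ R)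

theorem det_fromBlocks_add_mul_top (Q : Matrix κ ι R) :
    (fromBlocks X Y (Z + Q * X) (W + Q * Y)).det = (fromBlocks X Y Z W).det := by
  have h : fromBlocks X Y (Z + Q * X) (W + Q * Y) = fromBlocks 1 0 Q 1 * fromBlocks X Y Z W := by
    simp [fromBlocks_multiply, add_comm]
  rw [h, det_mul, det_fromBlocks_zero₁₂, det_one, det_one, one_mul, one_mul]

theorem det_fromBlocks_sub_right_mul (P : Matrix κ ι R) :
    (fromBlocks (X - Y * P) Y (Z - W * P) W).det = (fromBlocks X Y Z W).det := by
  have h : fromBlocks (X - Y * P) Y (Z - W * P) W =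
      fromBlocks X Y Z W * fromBlocks 1 0 (-P) 1 := by
    simp [fromBlocks_multiply, sub_eq_add_neg]
  rw [h, det_mul, det_fromBlocks_zero₁₂, det_one, det_one, one_mul, mul_one]

end BlockOperations

section SnocRow

variable {κ R : Type*} {n : ℕ}

def snocRow (A : Matrix (Fin n) κ R) (v : κ → R) : Matrix (Fin (n + 1)) κ R :=
  of fun i j => if hi : (i : ℕ) < n then A ⟨i, hi⟩ j else v j

theorem snocRow_add [Add R] (A B : Matrix (Fin n) κ R) (v w : κ → R) :
    snocRow A v + snocRow B w = snocRow (A + B) (v + w) := by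
  ext i j
  by_cases hi : (i : ℕ) < n <;> simp [snocRow, hi]

theorem snocRow_sub [Sub R] (A B : Matrix (Fin n) κ R) (v w : κ → R) :
    snocRow A v - snocRow B w = snocRow (A - B) (v - w) := by
  ext i j
  by_cases hi : (i : ℕ) < n <;> simp [snocRow, hi]

@[simp]
theorem snocRow_zero [Zero R] : snocRow (0 : Matrix (Fin n) κ R) 0 = 0 := by
  ext i j
  simp [snocRow]

theorem snocRow_mul {ι : Type*} [Fintype κ] [NonUnitalNonAssocSemiring R]
    (A : Matrix (Fin n) κ R) (v : κ → R) (X : Matrix κ ι R) :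
    snocRow A v * X = snocRow (A * X) (v ᵥ* X) := by
  ext i j
  by_cases hi : (i : ℕ) < n <;> simp [snocRow, hi, mul_apply, vecMul, dotProduct]

theorem updateRow_snocRow_last (A : Matrix (Fin n) κ R) (v w : κ → R) :
    (snocRow A v).updateRow (Fin.last n) w = snocRow A w := by
  ext i j
  by_cases hi : (i : ℕ) < n
  · simp [snocRow, hi, updateRow_apply, Fin.ext_iff, hi.ne]
  · simp [snocRow, hi, updateRow_apply, Fin.ext_iff]
    omega

theorem det_snocRow_smul [CommRing R] (A : Matrix (Fin n) (Fin (n + 1)) R) (c : R)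
    (v : Fin (n + 1) → R) : (snocRow A (c • v)).det = c * (snocRow A v).det := by
  rw [← updateRow_snocRow_last A v, det_updateRow_smul, updateRow_snocRow_last]

end SnocRow

theorem det_fromBlocks_swap_snocRow_one {R : Type*} [CommRing R] {n : ℕ}
    (A B : Matrix (Fin n) (Fin (n + 1)) R) :
    (fromBlocks (A.submatrix id Fin.succ) B (snocRow (B.submatrix id Fin.succ) 1)
        (snocRow A 1)).det =
      (A.submatrix id Fin.succ - B.submatrix id Fin.succ).det * (snocRow (A + B) 1).det := by
  set A' := A.submatrix id Fin.succ
  set B' := B.submatrix id Fin.succ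
  set P : Matrix (Fin (n + 1)) (Fin n) R :=
    (1 : Matrix (Fin (n + 1)) (Fin (n + 1)) R).submatrix id Fin.succ
  set Q : Matrix (Fin (n + 1)) (Fin n) R := snocRow 1 0
  have hBP : B * P = B' := mul_submatrix_one (Equiv.refl _) _ _
  have hAP : snocRow A 1 * P = snocRow A' 1 := mul_submatrix_one (Equiv.refl _) _ _
  have hQ : ∀ {m : Type} (X : Matrix (Fin n) m R), Q * X = snocRow X 0 := fun X => by
    simp [Q, snocRow_mul]
  calc (fromBlocks A' B (snocRow B' 1) (snocRow A 1)).det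
      = (fromBlocks (A' - B * P) B (snocRow B' 1 - snocRow A 1 * P) (snocRow A 1)).det :=
        (det_fromBlocks_sub_right_mul _ _ _ _ P).symm
    _ = (fromBlocks (A' - B') B (snocRow B' 1 - snocRow A' 1 + Q * (A' - B'))
          (snocRow A 1 + Q * B)).det := by
        rw [det_fromBlocks_add_mul_top, hBP, hAP]
    _ = (fromBlocks (A' - B') B 0 (snocRow (A + B) 1)).det := by
        rw [hQ, hQ, snocRow_sub, snocRow_add, snocRow_add]
        simp
    _ = (A' - B').det * (snocRow (A + B) 1).det := det_fromBlocks_zero₂₁ _ _ _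

end Matrix

/-- For n×(n+1) matrices A, B (columns indexed 0..n) over a field of characteristic zero,
the determinant of the (2n+1)×(2n+1) matrix with rows (A|₁..ₙ , B), (B|₁..ₙ , A) and a final
row of 1's equals (1/2)·det(A_{ij}-B_{ij})_{1≤i,j≤n}·det N, where N has rows (A+B) over
columns 0..n and a final row of 2's. -/
theorem det_block_with_ones_row
    {K : Type*} [Field K] [CharZero K] {n : ℕ}
    (A B : Matrix (Fin n) (Fin (n + 1)) K) :
    (Matrix.of fun i j : Fin (2 * n + 1) =>
        if hi : (i : ℕ) < n then
          (if hj : (j : ℕ) < n then A ⟨i, hi⟩ ⟨(j : ℕ) + 1, by omega⟩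
           else B ⟨i, hi⟩ ⟨(j : ℕ) - n, by have := j.isLt; omega⟩)
        else if hi2 : (i : ℕ) < 2 * n then
          (if hj : (j : ℕ) < n then B ⟨(i : ℕ) - n, by omega⟩ ⟨(j : ℕ) + 1, by omega⟩
           else A ⟨(i : ℕ) - n, by omega⟩ ⟨(j : ℕ) - n, by have := j.isLt; omega⟩)
        else 1).det
    = (1 / 2)
      * (Matrix.of fun i j : Fin n =>
          A i ⟨(j : ℕ) + 1, by have := j.isLt; omega⟩
          - B i ⟨(j : ℕ) + 1, by have := j.isLt; omega⟩).det
      * (Matrix.of fun i j : Fin (n + 1) =>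
          if hi : (i : ℕ) < n then A ⟨i, hi⟩ j + B ⟨i, hi⟩ j else 2).det := by
  have hlt : ∀ k : ℕ, n + k < 2 * n ↔ k < n := by omega
  have hrow : (fun _ => 2 : Fin (n + 1) → K) = (2 : K) • 1 := by
    ext; simp
  open Matrix in
  calc _ = (fromBlocks (A.submatrix id Fin.succ) B (snocRow (B.submatrix id Fin.succ) 1)
          (snocRow A 1)).det := by
        rw [← det_submatrix_equiv_self
          (finSumFinEquiv.trans (finCongr (by omega : n + (n + 1) = 2 * n + 1)))]
        congr 1
        ext (i | i) (j | j) <;> simp [snocRow, Fin.succ, hlt]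
    _ = (A.submatrix id Fin.succ - B.submatrix id Fin.succ).det * (snocRow (A + B) 1).det :=
        det_fromBlocks_swap_snocRow_one A B
    _ = (1 / 2) * (A.submatrix id Fin.succ - B.submatrix id Fin.succ).det
          * (snocRow (A + B) fun _ => 2).det := by
        rw [hrow, det_snocRow_smul]
        field_simp
    _ = _ := rfl
end

section
/- For any partition (λ_1,…,λ_n) of nonnegative integers and any integer k ≥ λ_1, the Schur polynomial in 2n variables satisfies ∏_{i=1}^n (x_i^{1/2} + x_i^{-1/2}) · s_{(k+λ_1,…,k+λ_n,k-λ_n,…,k-λ_1)}(x_1,…,x_n,x_1^{-1},…,x_n^{-1}) = so^odd_{(λ_1,…,λ_n)}(x_1,…,x_n) · oe_{(λ_1+1/2,…,λ_n+1/2)}(x_1,…,x_n). -/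
/-!
Write `x_i = y_i²`. Reversing the last `n` columns of the alternant `det(z_i^(μ_j + 2n - 1 - j))`
at `z = (x, x⁻¹)` and pulling `y_i^(±(2k + 2n - 1))` out of its rows leaves the block matrix
`[[A, B], [B, A]]` with `A = (y_i^(c_j))`, `B = (y_i^(-c_j))`, `c_j = 2λ_j + 2n - 2j - 1`, whose
determinant `det (A - B) * det (A + B)` is the product of the numerators of `so^odd_λ` and
`oe_{λ+1/2}`. The Vandermonde product of `(x, x⁻¹)` splits into the diagonal factors `x_i - x_i⁻¹`
and, for `i < j`, four factors multiplying to `-(x_i + x_i⁻¹ - x_j - x_j⁻¹)²`; the two signs are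
both `(-1)^(n choose 2)`, and `x_i - x_i⁻¹ = (y_i - y_i⁻¹)(y_i + y_i⁻¹)`.
-/

noncomputable section

/-- The field ℚ(y_1,…,y_n) of rational functions in the square-root variables
y_i = x_i^{1/2}, so that x_i = y_i². -/
abbrev K (n : ℕ) : Type := FractionRing (MvPolynomial (Fin n) ℚ)

/-- The square-root variable y_i = x_i^{1/2}. -/
def Y {n : ℕ} (i : Fin n) : K n :=
  algebraMap (MvPolynomial (Fin n) ℚ) (K n) (MvPolynomial.X i)

/-- The variable x_i = y_i². -/
def Xv {n : ℕ} (i : Fin n) : K n := (Y i) ^ 2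

/-- ∏_{i<j} (z_i + z_i⁻¹ - z_j - z_j⁻¹). -/
def xpairs {F : Type*} [Field F] {m : ℕ} (z : Fin m → F) : F :=
  ∏ i : Fin m, ∏ j : Fin m, if i < j then z i + (z i)⁻¹ - z j - (z j)⁻¹ else 1

/-- Bialternant Schur polynomial s_μ(z) = det(z_i^{μ_j+m-j}) / ∏_{i<j}(z_i - z_j). -/
def schur {F : Type*} [Field F] (m : ℕ) (μ : Fin m → ℤ) (z : Fin m → F) : F :=
  (Matrix.of fun i j : Fin m => z i ^ (μ j + m - 1 - (j : ℕ))).det /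
    ∏ i : Fin m, ∏ j : Fin m, if i < j then z i - z j else 1

/-- Odd orthogonal character so^odd, indexed by the doubled partition m = 2λ,
in the square-root variables y (x_i = y_i²). -/
def soOddD {F : Type*} [Field F] (n : ℕ) (m : Fin n → ℤ) (y : Fin n → F) : F :=
  (Matrix.of fun i j : Fin n =>
      y i ^ (m j + 2 * n - 2 * (j : ℕ) - 1) - y i ^ (-(m j + 2 * n - 2 * (j : ℕ) - 1))).det /
    ((∏ i : Fin n, (y i - (y i)⁻¹)) * xpairs fun i => (y i) ^ 2)

/-- Even orthogonal character oe, indexed by the doubled partition m = 2μ,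
in the square-root variables y (x_i = y_i²). -/
def oeD {F : Type*} [Field F] (n : ℕ) (m : Fin n → ℤ) (y : Fin n → F) : F :=
  (Matrix.of fun i j : Fin n =>
      y i ^ (m j + 2 * n - 2 * (j : ℕ) - 2) + y i ^ (-(m j + 2 * n - 2 * (j : ℕ) - 2))).det /
    ((if h : 0 < n then (if m ⟨n - 1, by omega⟩ = 0 then 2 else 1) else 1)
      * xpairs fun i => (y i) ^ 2)

open Finset Matrix

theorem Fin.sum_card_Ioi (n : ℕ) : ∑ i : Fin n, #(Ioi i) = n.choose 2 := by
  simp only [Fin.card_Ioi]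
  rw [Fin.sum_univ_eq_sum_range (fun i => n - 1 - i), Nat.choose_two_right,
    ← Finset.sum_range_id_mul_two, Nat.mul_div_cancel _ two_pos]
  exact Finset.sum_range_reflect id n

theorem Fin.prod_ite_lt_eq_prod_Ioi {M : Type*} [CommMonoid M] {n : ℕ} (i : Fin n)
    (f : Fin n → M) :
    ∏ j : Fin n, (if i < j then f j else 1) = ∏ j ∈ Ioi i, f j := by
  rw [← prod_filter, filter_lt_eq_Ioi]

theorem Fin.prod_ite_lt_const {M : Type*} [CommMonoid M] (n : ℕ) (a : M) :
    ∏ i : Fin n, ∏ j : Fin n, (if i < j then a else 1) = a ^ n.choose 2 := by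
  rw [← Fin.sum_card_Ioi, ← prod_pow_eq_pow_sum]
  exact prod_congr rfl fun i _ =>
    (Fin.prod_ite_lt_eq_prod_Ioi i fun _ => a).trans (Finset.prod_const a)

theorem Fin.prod_prod_ite_lt_append {M α : Type*} [CommMonoid M] {m n : ℕ} (f : α → α → M)
    (u : Fin m → α) (v : Fin n → α) :
    ∏ i, ∏ j, (if i < j then f (Fin.append u v i) (Fin.append u v j) else 1)
      = (∏ i, ∏ j, if i < j then f (u i) (u j) else 1) * (∏ i, ∏ j, f (u i) (v j))
        * ∏ i, ∏ j, if i < j then f (v i) (v j) else 1 := by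
  have h₀ (i j : Fin m) : castAdd n i < castAdd n j ↔ i < j := Iff.rfl
  have h₁ (i : Fin m) (j : Fin n) : castAdd n i < natAdd m j := by
    simp only [Fin.lt_def, Fin.val_castAdd, Fin.val_natAdd]; omega
  have h₂ (i : Fin n) (j : Fin m) : ¬ natAdd m i < castAdd n j := by
    simp only [Fin.lt_def, Fin.val_castAdd, Fin.val_natAdd]; omega
  simp [Fin.prod_univ_add, prod_mul_distrib, mul_assoc, h₀, h₁, h₂]

theorem Fintype.prod_prod_eq_prod_diag_mul_prod_lt {M ι : Type*} [CommMonoid M] [Fintype ι]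
    [LinearOrder ι] (g : ι → ι → M) :
    ∏ i, ∏ j, g i j = (∏ i, g i i) * ∏ i, ∏ j, if i < j then g i j * g j i else 1 := by
  have hsplit (i j : ι) : g i j = (if i < j then g i j else 1) * (if i = j then g i j else 1)
      * (if j < i then g i j else 1) := by
    rcases lt_trichotomy i j with h | rfl | h
    · simp [h, h.ne, h.not_gt]
    · simp
    · simp [h, h.ne', h.not_gt]
  have hswap : ∏ i, ∏ j, (if j < i then g i j else 1) = ∏ i, ∏ j, if i < j then g j i else 1 :=
    prod_comm
  have hpair (i j : ι) : (if i < j then g i j * g j i else 1)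
      = (if i < j then g i j else 1) * (if i < j then g j i else 1) := by
    split_ifs <;> simp
  conv_lhs => enter [2, i, 2, j]; rw [hsplit i j]
  simp only [prod_mul_distrib, hswap, hpair, prod_ite_eq]
  ac_rfl

theorem Fin.sign_revPerm (n : ℕ) :
    Equiv.Perm.sign (Fin.revPerm : Equiv.Perm (Fin n)) = (-1) ^ n.choose 2 := by
  -- reversing `0, 1, …, n - 1` negates each of the `n choose 2` Vandermonde factors
  set v : Fin n → ℤ := fun i => i
  have hv : (vandermonde v).det ≠ 0 := det_vandermonde_ne_zero_iff.mpr
    fun i j h => Fin.ext (by simpa [v] using h)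
  have hrev : (vandermonde (v ∘ Fin.rev)).det = (-1) ^ n.choose 2 * (vandermonde v).det := by
    simp_rw [det_vandermonde, ← Fin.prod_ite_lt_eq_prod_Ioi, ← Fin.prod_ite_lt_const,
      ← prod_mul_distrib]
    refine prod_congr rfl fun i _ => prod_congr rfl fun j _ => ?_
    split_ifs
    · simp only [v, Function.comp_apply, Fin.val_rev]; omega
    · rfl
  have hperm := det_permute Fin.revPerm (vandermonde v)
  rw [show (vandermonde v).submatrix Fin.revPerm id = vandermonde (v ∘ Fin.rev) from rfl,
    hrev] at hperm
  ext
  push_cast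
  exact (mul_right_cancel₀ hv hperm).symm

theorem Matrix.det_fromBlocks_eq_det_sub_mul_det_add {R : Type*} [CommRing R] {n : Type*}
    [Fintype n] [DecidableEq n] (A B : Matrix n n R) :
    (fromBlocks A B B A).det = (A - B).det * (A + B).det := by
  have h : fromBlocks 1 (-1) 0 1 * fromBlocks A B B A * fromBlocks 1 1 0 1
      = fromBlocks (A - B) 0 B (A + B) := by
    simp only [fromBlocks_multiply]
    congr 1 <;> noncomm_ring
  simpa [det_fromBlocks_zero₂₁, det_fromBlocks_zero₁₂] using congrArg det h

theorem det_zpow_append_inv {F : Type*} [Field F] {n : ℕ} (w : Fin n → F) (hw : ∀ i, w i ≠ 0)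
    (s : ℤ) (c : Fin n → ℤ) :
    (of fun i j => Fin.append w (fun i => (w i)⁻¹) i
        ^ Fin.append (fun j => s + c j) (fun j => s - c (Fin.rev j)) j).det
      = (-1) ^ n.choose 2 * ((of fun i j => w i ^ c j - w i ^ (-c j)).det
        * (of fun i j => w i ^ c j + w i ^ (-c j)).det) := by
  set M := of fun i j => Fin.append w (fun i => (w i)⁻¹) i
    ^ Fin.append (fun j => s + c j) (fun j => s - c (Fin.rev j)) j
  set A : Matrix (Fin n) (Fin n) F := of fun i j => w i ^ c j
  set B : Matrix (Fin n) (Fin n) F := of fun i j => w i ^ (-c j)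
  set v : Fin n ⊕ Fin n → F := Sum.elim (fun i => w i ^ s) (fun i => w i ^ (-s))
  set σ : Equiv.Perm (Fin n ⊕ Fin n) := Equiv.sumCongr 1 Fin.revPerm
  have hblocks : (M.submatrix finSumFinEquiv finSumFinEquiv).submatrix id σ
      = of fun i j => v i * fromBlocks A B B A i j := by
    ext (i | i) (j | j) <;>
      simp only [M, A, B, v, σ, submatrix_apply, of_apply, id, Equiv.sumCongr_apply, Sum.map_inl,
        Sum.map_inr, Equiv.Perm.coe_one, Fin.revPerm_apply, finSumFinEquiv_apply_left,
        finSumFinEquiv_apply_right, Fin.append_left, Fin.append_right, Fin.rev_rev, Sum.elim_inl,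
        Sum.elim_inr, fromBlocks_apply₁₁, fromBlocks_apply₁₂, fromBlocks_apply₂₁,
        fromBlocks_apply₂₂, _root_.inv_zpow', ← zpow_add₀ (hw i)] <;>
      ring_nf
  have hv : ∏ i, v i = 1 := by
    simp only [v, Fintype.prod_sum_type, Sum.elim_inl, Sum.elim_inr, _root_.zpow_neg,
      prod_inv_distrib]
    exact mul_inv_cancel₀ (prod_ne_zero_iff.mpr fun i _ => zpow_ne_zero s (hw i))
  have hsign : (Equiv.Perm.sign σ : F) = (-1) ^ n.choose 2 := by
    simp [σ, Equiv.Perm.sign_sumCongr, Fin.sign_revPerm]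
  have key := det_permute' σ (M.submatrix finSumFinEquiv finSumFinEquiv)
  rw [hblocks, det_mul_column, hv, one_mul, det_fromBlocks_eq_det_sub_mul_det_add,
    det_submatrix_equiv_self, hsign] at key
  change _ = _ * ((A - B).det * (A + B).det)
  rw [key, ← mul_assoc, ← mul_pow, neg_one_mul, neg_neg, one_pow, one_mul]

theorem prod_prod_ite_lt_sub_append_inv {F : Type*} [Field F] {n : ℕ} (x : Fin n → F)
    (hx : ∀ i, x i ≠ 0) :
    ∏ i, ∏ j, (if i < j then Fin.append x (fun i => (x i)⁻¹) i - Fin.append x (fun i => (x i)⁻¹) j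
      else 1) = (-1) ^ n.choose 2 * (∏ i, (x i - (x i)⁻¹)) * xpairs x ^ 2 := by
  have hquad (i j : Fin n) : (x i - x j) * ((x i - (x j)⁻¹) * (x j - (x i)⁻¹)) * ((x i)⁻¹ - (x j)⁻¹)
      = -1 * (x i + (x i)⁻¹ - x j - (x j)⁻¹) ^ 2 := by
    field_simp [hx i, hx j]; ring
  rw [Fin.prod_prod_ite_lt_append (· - ·),
    Fintype.prod_prod_eq_prod_diag_mul_prod_lt fun i j => x i - (x j)⁻¹, xpairs]
  simp only [Fin.prod_ite_lt_eq_prod_Ioi]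
  calc _ = (∏ i, (x i - (x i)⁻¹)) * ∏ i, ∏ j ∈ Ioi i,
        (x i - x j) * ((x i - (x j)⁻¹) * (x j - (x i)⁻¹)) * ((x i)⁻¹ - (x j)⁻¹) := by
        simp only [prod_mul_distrib]; ring
    _ = (∏ i, (x i - (x i)⁻¹)) * ∏ i, ∏ j ∈ Ioi i, -1 * (x i + (x i)⁻¹ - x j - (x j)⁻¹) ^ 2 := by
        simp only [hquad]
    _ = _ := by
        simp only [prod_mul_distrib, prod_pow, prod_const, prod_pow_eq_pow_sum, Fin.sum_card_Ioi]
        ring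

theorem prod_add_inv_mul_schur_append {F : Type*} [Field F] {n : ℕ} (y : Fin n → F)
    (hy : ∀ i, y i ≠ 0) (hy₂ : ∀ i, y i + (y i)⁻¹ ≠ 0) (lam : Fin n → ℤ) (k : ℤ) :
    (∏ i, (y i + (y i)⁻¹))
      * schur (n + n) (Fin.append (fun j => k + lam j) (fun j => k - lam (Fin.rev j)))
          (Fin.append (fun i => y i ^ 2) (fun i => (y i ^ 2)⁻¹))
      = soOddD n (fun j => 2 * lam j) y * oeD n (fun j => 2 * lam j + 1) y := by
  set c : Fin n → ℤ := fun j => 2 * lam j + 2 * n - 2 * (j : ℕ) - 1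
  have hnum : (of fun i j => Fin.append (fun i => y i ^ 2) (fun i => (y i ^ 2)⁻¹) i
        ^ (Fin.append (fun j => k + lam j) (fun j => k - lam (Fin.rev j)) j
          + ((n + n : ℕ) : ℤ) - 1 - (j : ℕ)))
      = of fun i j => Fin.append y (fun i => (y i)⁻¹) i
        ^ Fin.append (fun j => (2 * k + 2 * n - 1) + c j)
          (fun j => (2 * k + 2 * n - 1) - c (Fin.rev j)) j := by
    ext i j
    refine Fin.addCases (fun p => ?_) (fun p => ?_) i <;>
      refine Fin.addCases (fun q => ?_) (fun q => ?_) j <;>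
      simp only [of_apply, Fin.append_left, Fin.append_right, _root_.inv_zpow',
        ← zpow_natCast, ← _root_.zpow_mul, Fin.val_castAdd, Fin.val_natAdd] <;>
      congr 1
    all_goals simp only [c, Fin.val_rev]; omega
  have hodd (j : Fin n) : 2 * lam j + 1 ≠ 0 := by omega
  simp only [schur, soOddD, oeD, hodd, if_false, dite_eq_ite, ite_self, hnum,
    det_zpow_append_inv y hy, prod_prod_ite_lt_sub_append_inv _ fun i => pow_ne_zero 2 (hy i)]
  have hsq (i : Fin n) : y i ^ 2 - (y i ^ 2)⁻¹ = (y i - (y i)⁻¹) * (y i + (y i)⁻¹) := by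
    field_simp [hy i]; ring
  have hoe : (of fun i j : Fin n => y i ^ (2 * lam j + 1 + 2 * n - 2 * (j : ℕ) - 2)
      + y i ^ (-(2 * lam j + 1 + 2 * n - 2 * (j : ℕ) - 2)))
      = of fun i j => y i ^ c j + y i ^ (-c j) := by
    ext i j; simp only [of_apply, c]; ring_nf
  have hP : ∏ i, (y i + (y i)⁻¹) ≠ 0 := prod_ne_zero_iff.mpr fun i _ => hy₂ i
  have hε : (-1 : F) ^ n.choose 2 ≠ 0 := pow_ne_zero _ (neg_ne_zero.mpr one_ne_zero)
  rw [hoe, prod_congr rfl fun i _ => hsq i, prod_mul_distrib, mul_div_assoc', div_mul_div_comm,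
    ← mul_div_mul_left (_ * _ : F) (_ * (1 * _)) (mul_ne_zero hP hε)]
  congr 1 <;> ring

theorem schur_eq_schur_cast {F : Type*} [Field F] {m m' : ℕ} (h : m = m') (μ : Fin m → ℤ)
    (z : Fin m → F) :
    schur m μ z = schur m' (fun j => μ (Fin.cast h.symm j)) (fun i => z (Fin.cast h.symm i)) := by
  subst h; rfl

theorem Y_ne_zero {n : ℕ} (i : Fin n) : Y i ≠ 0 :=
  (map_ne_zero_iff _ (IsFractionRing.injective _ _)).mpr (MvPolynomial.X_ne_zero i)

theorem Y_add_inv_ne_zero {n : ℕ} (i : Fin n) : Y i + (Y i)⁻¹ ≠ 0 := by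
  have hsq : Y i ^ 2 + 1 ≠ 0 := by
    rw [Y, ← map_pow, ← map_one (algebraMap (MvPolynomial (Fin n) ℚ) (K n)), ← map_add]
    refine (map_ne_zero_iff _ (IsFractionRing.injective _ _)).mpr fun h => ?_
    simpa using congrArg MvPolynomial.constantCoeff h
  contrapose! hsq
  rw [show Y i ^ 2 + 1 = Y i * (Y i + (Y i)⁻¹) by field_simp [Y_ne_zero i], hsq, mul_zero]

/-- Theorem 1 of the paper (integer-partition case): for a partition λ and an integer k ≥ λ_1,
∏_i (x_i^{1/2}+x_i^{-1/2}) · s_{(k+λ_1,…,k+λ_n,k-λ_n,…,k-λ_1)}(x_1,…,x_n,x_1⁻¹,…,x_n⁻¹)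
  = so^odd_λ(x) · oe_{(λ_1+1/2,…,λ_n+1/2)}(x). -/
theorem schur_factorization_thm1 {n : ℕ} (lam : Fin n → ℕ)
    (k : ℤ) :
    (∏ i : Fin n, (Y i + (Y i)⁻¹))
      * schur (2 * n)
          (fun j => if h : (j : ℕ) < n then k + lam ⟨j, h⟩
                    else k - lam ⟨2 * n - 1 - (j : ℕ), by have := j.isLt; omega⟩)
          (fun i => if h : (i : ℕ) < n then Xv ⟨i, h⟩
                    else (Xv ⟨(i : ℕ) - n, by have := i.isLt; omega⟩)⁻¹)
      = soOddD n (fun j => 2 * (lam j : ℤ)) Y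
        * oeD n (fun j => 2 * (lam j : ℤ) + 1) Y := by
  rw [schur_eq_schur_cast (two_mul n)]
  convert prod_add_inv_mul_schur_append Y Y_ne_zero Y_add_inv_ne_zero (fun j => (lam j : ℤ)) k
    using 3
  · funext j
    refine Fin.addCases (fun q => ?_) (fun q => ?_) j
    · simp [q.isLt]
    · rw [Fin.append_right, dif_neg (by simp)]
      congr 3
      ext
      simp only [Fin.val_cast, Fin.val_natAdd, Fin.val_rev]
      omega
  · funext i
    refine Fin.addCases (fun p => ?_) (fun p => ?_) i
    · simp [p.isLt, Xv]
    · rw [Fin.append_right, dif_neg (by simp)]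
      simp [Xv]
end
end

section
/- For nonnegative integers m and n, the number of plane partitions in a 2m×n×n box factors as PP(2m,n,n) = SPP(2m,n,n) · TCPP(2m,n,n), i.e., ∏_{i=1}^{2m}∏_{j=1}^n∏_{k=1}^n (i+j+k-1)/(i+j+k-2) = [∏_{1≤i≤j≤n} (i+j+2m-1)/(i+j-1)] · [∏_{1≤i<j≤n} (i+j+2m-1)/(i+j-1)]. -/
lemma telesc (N c : ℕ) :
    ∏ i ∈ Finset.range N, ((i + c + 2 : ℚ) / (i + c + 1)) = (N + c + 1) / (c + 1) := by
  induction N with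
  | zero =>
    have h1 : (c : ℚ) + 1 ≠ 0 := by positivity
    simp [div_self h1]
  | succ N ih =>
    rw [Finset.prod_range_succ, ih]
    have h1 : (c : ℚ) + 1 ≠ 0 := by positivity
    have h2 : (N : ℚ) + c + 1 ≠ 0 := by positivity
    push_cast
    field_simp
    ring

lemma square_split (g : ℕ → ℚ) (n : ℕ) :
    ∏ j ∈ Finset.range n, ∏ k ∈ Finset.range n, g (j + k)
    = (∏ j ∈ Finset.range n, ∏ i ∈ Finset.range (j + 1), g (i + j)) *
      (∏ j ∈ Finset.range n, ∏ i ∈ Finset.range j, g (i + j)) := by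
  induction n with
  | zero => simp
  | succ n ih =>
    simp only [Finset.prod_range_succ]
    rw [Finset.prod_mul_distrib, ih]
    have hc : ∏ k ∈ Finset.range n, g (n + k) = ∏ k ∈ Finset.range n, g (k + n) :=
      Finset.prod_congr rfl (fun k _ => by rw [Nat.add_comm])
    rw [hc, show (∏ x ∈ Finset.range n, (∏ i ∈ Finset.range x, g (i + x)) * g (x + x))
        = ∏ x ∈ Finset.range n, ∏ i ∈ Finset.range (x + 1), g (i + x) from
      Finset.prod_congr rfl (fun x _ => (Finset.prod_range_succ _ x).symm)]
    ring

/-- PP(2m,n,n) = SPP(2m,n,n) · TCPP(2m,n,n): the MacMahon box product over a 2m×n×n box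
factors as the symmetric plane partition product times the transpose complementary one
(indices shifted to start at 0). -/
theorem PP_eq_SPP_mul_TCPP (m n : ℕ) :
    (∏ i ∈ Finset.range (2 * m), ∏ j ∈ Finset.range n, ∏ k ∈ Finset.range n,
        ((i + j + k + 2 : ℚ) / (i + j + k + 1)))
    = (∏ j ∈ Finset.range n, ∏ i ∈ Finset.range (j + 1),
        ((i + j + 2 * m + 1 : ℚ) / (i + j + 1)))
      * (∏ j ∈ Finset.range n, ∏ i ∈ Finset.range j,
        ((i + j + 2 * m + 1 : ℚ) / (i + j + 1))) := by
  have hswap : (∏ i ∈ Finset.range (2 * m), ∏ j ∈ Finset.range n, ∏ k ∈ Finset.range n,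
      ((i + j + k + 2 : ℚ) / (i + j + k + 1)))
      = ∏ j ∈ Finset.range n, ∏ k ∈ Finset.range n, ∏ i ∈ Finset.range (2 * m),
        ((i + j + k + 2 : ℚ) / (i + j + k + 1)) := by
    rw [Finset.prod_comm]
    exact Finset.prod_congr rfl (fun j _ => Finset.prod_comm)
  rw [hswap]
  have hinner : ∀ j k : ℕ, (∏ i ∈ Finset.range (2 * m),
      ((i + j + k + 2 : ℚ) / (i + j + k + 1)))
      = ((j + k : ℕ) + 2 * m + 1 : ℚ) / ((j + k : ℕ) + 1) := by
    intro j k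
    have h := telesc (2 * m) (j + k)
    push_cast at h ⊢
    calc ∏ i ∈ Finset.range (2 * m), ((i : ℚ) + j + k + 2) / ((i : ℚ) + j + k + 1)
        = ∏ x ∈ Finset.range (2 * m), ((x : ℚ) + (j + k) + 2) / ((x : ℚ) + (j + k) + 1) :=
          Finset.prod_congr rfl (fun i _ => by ring_nf)
      _ = (2 * m + (j + k) + 1) / (j + k + 1) := h
      _ = _ := by ring_nf
  calc ∏ j ∈ Finset.range n, ∏ k ∈ Finset.range n, ∏ i ∈ Finset.range (2 * m),
        ((i + j + k + 2 : ℚ) / (i + j + k + 1))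
      = ∏ j ∈ Finset.range n, ∏ k ∈ Finset.range n,
        (fun s : ℕ => ((s : ℚ) + 2 * m + 1) / ((s : ℚ) + 1)) (j + k) := by
        refine Finset.prod_congr rfl fun j _ => Finset.prod_congr rfl fun k _ => ?_
        simpa using hinner j k
    _ = _ := by
        rw [square_split (fun s : ℕ => ((s : ℚ) + 2 * m + 1) / ((s : ℚ) + 1)) n]
        refine congrArg₂ (· * ·) ?_ ?_ <;>
          refine Finset.prod_congr rfl fun j _ => Finset.prod_congr rfl fun i _ => ?_ <;>
          push_cast <;> ring_nf
end

section
/- For every nonnegative integer n, ASM(2n+1) = R(2n+2) · VSASM(2n+1), i.e., ∏_{i=0}^{2n} (3i+1)!/(2n+1+i)! = [∏_{i=0}^{n} (6i+1)!/(2n+2i+1)!] · [∏_{i=1}^{n} (6i-2)!/(2n+2i)!]. -/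
lemma prod_range_odd_split (f : ℕ → ℚ) (m : ℕ) :
    ∏ i ∈ Finset.range (2 * m + 1), f i
      = (∏ j ∈ Finset.range (m + 1), f (2 * j)) * ∏ j ∈ Finset.range m, f (2 * j + 1) := by
  induction m with
  | zero => simp
  | succ m ih =>
      have h : 2 * (m + 1) + 1 = (2 * m + 1) + 1 + 1 := by ring
      rw [h, Finset.prod_range_succ, Finset.prod_range_succ, ih,
        Finset.prod_range_succ (fun j => f (2 * j)), Finset.prod_range_succ (fun j => f (2 * j)),
        Finset.prod_range_succ (fun j => f (2 * j + 1))]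
      have e1 : 2 * (m + 1) = 2 * m + 2 := by ring
      rw [e1, Finset.prod_range_succ (fun j => f (2 * j))]
      ring

/-- ASM(2n+1) = R(2n+2) · VSASM(2n+1), as an identity of rational products
(indices shifted to start at 0). -/
theorem ASM_odd_eq_R_mul_VSASM (n : ℕ) :
    (∏ i ∈ Finset.range (2 * n + 1),
        ((Nat.factorial (3 * i + 1) : ℚ) / Nat.factorial (2 * n + 1 + i)))
    = (∏ i ∈ Finset.range (n + 1),
        ((Nat.factorial (6 * i + 1) : ℚ) / Nat.factorial (2 * n + 2 * i + 1)))
      * (∏ i ∈ Finset.range n,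
        ((Nat.factorial (6 * i + 4) : ℚ) / Nat.factorial (2 * n + 2 * i + 2))) := by
  rw [prod_range_odd_split (fun i => (Nat.factorial (3 * i + 1) : ℚ) / Nat.factorial (2 * n + 1 + i)) n]
  congr 1
  · apply Finset.prod_congr rfl
    intro j _
    congr 2 <;> ring_nf
  · apply Finset.prod_congr rfl
    intro j _
    congr 2 <;> ring_nf
end

section
/- For every positive integer n, ASM(2n) = 2 · R(2n) · VSASM(2n+1), i.e., ∏_{i=0}^{2n-1} (3i+1)!/(2n+i)! = 2 · [∏_{i=0}^{n-1} (6i+1)!/(2n+2i-1)!] · [∏_{i=1}^{n} (6i-2)!/(2n+2i)!]. -/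
/-!
Split the product over `i < 2n` into even `i = 2j` and odd `i = 2j + 1` factors. Moving one
factor between the denominators `(2n+2j)!` and `(2n+2j+1)!` turns them into the denominators
`(2n+2j-1)!` and `(2n+2j+2)!` of `R(2n)` and `VSASM(2n+1)`, at the price of the factor
`(2n+2j+2)/(2n+2j)`, and these telescope to `4n/2n = 2`.
-/

open Finset Nat

theorem Finset.prod_range_two_mul {M : Type*} [CommMonoid M] (f : ℕ → M) (n : ℕ) :
    ∏ i ∈ range (2 * n), f i = (∏ j ∈ range n, f (2 * j)) * ∏ j ∈ range n, f (2 * j + 1) := by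
  induction n with
  | zero => simp
  | succ n ih =>
    rw [show 2 * (n + 1) = 2 * n + 1 + 1 by ring, prod_range_succ, prod_range_succ, ih,
      prod_range_succ, prod_range_succ, mul_mul_mul_comm, mul_assoc]

theorem Finset.prod_range_div_of_ne_zero {G₀ : Type*} [CommGroupWithZero G₀] (f : ℕ → G₀)
    (hf : ∀ i, f i ≠ 0) (n : ℕ) : ∏ i ∈ range n, f (i + 1) / f i = f n / f 0 := by
  induction n with
  | zero => simp [div_self (hf 0)]
  | succ n ih => rw [prod_range_succ, ih, mul_comm, div_mul_div_cancel₀ (hf n)]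

theorem div_factorial_mul_div_factorial_succ {K : Type*} [Field K] [CharZero K] (x y : K)
    {m : ℕ} (hm : m ≠ 0) :
    x / (m ! : K) * (y / ((m + 1)! : K)) =
      x / ((m - 1)! : K) * (y / ((m + 2)! : K)) * ((m + 2) / m) := by
  obtain ⟨k, rfl⟩ := exists_eq_succ_of_ne_zero hm
  have hk3 : (k : K) + 1 + 1 + 1 ≠ 0 := by exact_mod_cast (k + 2).succ_ne_zero
  simp only [factorial_succ, succ_sub_one, cast_mul, cast_succ]
  field_simp
  ring

/-- ASM(2n) = 2 · R(2n) · VSASM(2n+1), as an identity of rational products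
(indices shifted to start at 0). -/
theorem ASM_even_eq_two_mul_R_mul_VSASM (n : ℕ) (hn : 0 < n) :
    (∏ i ∈ Finset.range (2 * n),
        ((Nat.factorial (3 * i + 1) : ℚ) / Nat.factorial (2 * n + i)))
    = 2 * (∏ i ∈ Finset.range n,
        ((Nat.factorial (6 * i + 1) : ℚ) / Nat.factorial (2 * n + 2 * i - 1)))
      * (∏ i ∈ Finset.range n,
        ((Nat.factorial (6 * i + 4) : ℚ) / Nat.factorial (2 * n + 2 * i + 2))) := by
  set f : ℕ → ℚ := fun j ↦ ((2 * n + 2 * j : ℕ) : ℚ)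
  have hf : ∀ j, f j ≠ 0 := fun j ↦ by simp only [f]; positivity
  calc _ = ∏ j ∈ range n, ((6 * j + 1)! / ((2 * n + 2 * j)! : ℚ) *
          ((6 * j + 4)! / ((2 * n + 2 * j + 1)! : ℚ))) := by
        rw [prod_range_two_mul, ← prod_mul_distrib]
        refine prod_congr rfl fun j _ ↦ ?_
        ring_nf
    _ = ∏ j ∈ range n, ((6 * j + 1)! / ((2 * n + 2 * j - 1)! : ℚ) *
          ((6 * j + 4)! / ((2 * n + 2 * j + 2)! : ℚ)) * (f (j + 1) / f j)) := by
        refine prod_congr rfl fun j _ ↦ ?_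
        rw [div_factorial_mul_div_factorial_succ _ _ (by omega)]
        simp only [f]
        push_cast
        ring
    _ = _ := by
        rw [prod_mul_distrib, prod_mul_distrib, prod_range_div_of_ne_zero f hf]
        simp only [f]
        push_cast
        field_simp
        ring
end
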